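/- Let K ⊂ ℝ² be compact with diam(K) ≤ d, d > 0. Let a : ℝ² → ℝ and f : ℝ² → ℝ be measurable and bounded with a(y) = f(y) = 0 for y ∉ K, and let δa ∈ L²(ℝ²) with δa(y) = 0 for y ∉ K. Then the function W(x) = |a(x)| ∫_{S¹} ∫₀^∞ |f(x+tθ)| exp(−∫₀^t a(x+sθ) ds) (∫₀^t |δa(x+sθ)| ds) dt dθ belongs to L²(ℝ²) and ‖W‖_{L²(ℝ²)} ≤ 4π d² e^{d‖a‖_∞} ‖a‖_∞ ‖f‖_∞ ‖δa‖_{L²(ℝ²)}. -/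

import Mathlib

open MeasureTheory Real Set
open scoped ENNReal

/-- The unit direction vector in `ℝ²` with angle `φ`; integrating over `φ ∈ (0, 2π]`
realizes integration over the unit circle `S¹` with its arclength measure. -/
noncomputable def dir (φ : ℝ) : EuclideanSpace ℝ (Fin 2) :=
  (WithLp.equiv 2 (Fin 2 → ℝ)).symm ![Real.cos φ, Real.sin φ]

/-!
For `x ∈ K` a ray `x + tθ` leaves `K` once `t > d`, so only `t ∈ (0, d]` contributes; there the
weight `|f| e^{-∫a}` is at most `F e^{dA}` and `∫₀^t |δa| ≤ ∫₀^d |δa|`. Hence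
`W(x) ≤ A d F e^{dA} ∫_{S¹} ∫₀^d |δa(x + sθ)| ds dθ`, an integral of translates of `|δa|` over a
parameter set of measure `2πd`. Cauchy–Schwarz in the parameters and translation invariance of
Lebesgue measure bound its `L²` norm by `2πd ‖δa‖₂`.
-/

theorem lintegral_sq_le_measure_univ_mul {α : Type*} [MeasurableSpace α] (μ : Measure α)
    {h : α → ℝ≥0∞} (hh : AEMeasurable h μ) :
    (∫⁻ ω, h ω ∂μ) ^ 2 ≤ μ univ * ∫⁻ ω, h ω ^ 2 ∂μ := by
  have holder := ENNReal.lintegral_mul_le_Lp_mul_Lq μ Real.HolderConjugate.two_two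
    (aemeasurable_const (b := (1 : ℝ≥0∞))) hh
  simp only [Pi.mul_apply, one_mul, ENNReal.rpow_ofNat, one_pow, lintegral_const] at holder
  have hsq : ∀ x : ℝ≥0∞, (x ^ (1 / 2 : ℝ)) ^ 2 = x := fun x => by
    rw [← ENNReal.rpow_natCast, ← ENNReal.rpow_mul]; norm_num
  calc (∫⁻ ω, h ω ∂μ) ^ 2
      ≤ (μ univ ^ (1 / 2 : ℝ) * (∫⁻ ω, h ω ^ 2 ∂μ) ^ (1 / 2 : ℝ)) ^ 2 := by gcongr
    _ = μ univ * ∫⁻ ω, h ω ^ 2 ∂μ := by rw [mul_pow, hsq, hsq]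

theorem lintegral_sq_lintegral_comp_add_le {E Ω : Type*} [MeasurableSpace E] [AddGroup E]
    [MeasurableAdd₂ E] (μ : Measure E) [μ.IsAddRightInvariant] [SFinite μ]
    [MeasurableSpace Ω] (ν : Measure Ω) [SFinite ν] {v : Ω → E} (hv : Measurable v)
    {g : E → ℝ≥0∞} (hg : Measurable g) :
    ∫⁻ x, (∫⁻ ω, g (x + v ω) ∂ν) ^ 2 ∂μ ≤ ν univ ^ 2 * ∫⁻ y, g y ^ 2 ∂μ := by
  have hmeas : Measurable fun p : E × Ω => g (p.1 + v p.2) ^ 2 :=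
    (hg.comp (measurable_fst.add (hv.comp measurable_snd))).pow_const 2
  calc ∫⁻ x, (∫⁻ ω, g (x + v ω) ∂ν) ^ 2 ∂μ
      ≤ ∫⁻ x, ν univ * ∫⁻ ω, g (x + v ω) ^ 2 ∂ν ∂μ := lintegral_mono fun x =>
        lintegral_sq_le_measure_univ_mul ν (hg.comp (measurable_const.add hv)).aemeasurable
    _ = ν univ * ∫⁻ ω, ∫⁻ x, g (x + v ω) ^ 2 ∂μ ∂ν := by
        rw [lintegral_const_mul _ hmeas.lintegral_prod_right',
          lintegral_lintegral_swap hmeas.aemeasurable]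
    _ = ν univ ^ 2 * ∫⁻ y, g y ^ 2 ∂μ := by
        simp_rw [lintegral_add_right_eq_self (fun y => g y ^ 2), lintegral_const]
        ring

theorem AEMeasurable.exists_measurable_ge_ae_eq {α : Type*} [MeasurableSpace α] {μ : Measure α}
    {f : α → ℝ≥0∞} (hf : AEMeasurable f μ) : ∃ g, Measurable g ∧ f ≤ g ∧ f =ᵐ[μ] g := by
  classical
  set N := toMeasurable μ {x | f x ≠ hf.mk f x}
  have hN : N =ᵐ[μ] (∅ : Set α) := by
    rw [ae_eq_empty, measure_toMeasurable]; exact ae_iff.1 hf.ae_eq_mk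
  refine ⟨N.piecewise ⊤ (hf.mk f),
    Measurable.piecewise (measurableSet_toMeasurable μ _) measurable_const hf.measurable_mk,
    fun x => ?_, ?_⟩
  · by_cases hx : x ∈ N
    · simp [hx]
    · have hfx : f x = hf.mk f x := not_not.1 fun hne => hx (subset_toMeasurable μ _ hne)
      simp [hx, hfx]
  · refine hf.ae_eq_mk.trans ?_
    filter_upwards [hN.mem_iff] with x hx
    rw [Set.piecewise_eq_of_notMem _ _ _ (by simpa using hx)]

section Ray

variable {E : Type*} [NormedAddCommGroup E] [NormedSpace ℝ E]

theorem add_smul_notMem_of_diam_lt {K : Set E} (hK : Bornology.IsBounded K) {x θ : E}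
    (hx : x ∈ K) (hθ : ‖θ‖ = 1) {t : ℝ} (ht : Metric.diam K < t) : x + t • θ ∉ K := by
  intro hmem
  have hdist := Metric.dist_le_diam_of_mem hK hx hmem
  rw [dist_self_add_right, norm_smul, hθ, mul_one, Real.norm_eq_abs] at hdist
  linarith [le_abs_self t]

theorem neg_intervalIntegral_le_mul {u : ℝ → ℝ} {A : ℝ} (hu : ∀ s, |u s| ≤ A) {t : ℝ}
    (ht : 0 ≤ t) : -∫ s in (0 : ℝ)..t, u s ≤ A * t := by
  have h := intervalIntegral.norm_integral_le_of_norm_le_const (a := 0) (b := t) (f := u)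
    fun s _ => (Real.norm_eq_abs _).trans_le (hu s)
  rw [Real.norm_eq_abs, sub_zero, abs_of_nonneg ht] at h
  exact (neg_le_abs _).trans h

theorem lintegral_ray_le {K : Set E} (hK : Bornology.IsBounded K) {d : ℝ}
    (hd : Metric.diam K ≤ d) {a f : E → ℝ} {A F : ℝ} (haA : ∀ y, |a y| ≤ A)
    (hfF : ∀ y, |f y| ≤ F) (hfsupp : ∀ y ∉ K, f y = 0) (G : E → ℝ≥0∞) {x θ : E} (hx : x ∈ K)
    (hθ : ‖θ‖ = 1) :
    ∫⁻ t in Ioi 0, ENNReal.ofReal (|f (x + t • θ)| * exp (-∫ s in (0 : ℝ)..t, a (x + s • θ))) *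
        ∫⁻ s in Ioc 0 t, G (x + s • θ)
      ≤ ENNReal.ofReal d * ENNReal.ofReal (F * exp (d * A)) * ∫⁻ s in Ioc 0 d, G (x + s • θ) := by
  have hA : 0 ≤ A := (abs_nonneg _).trans (haA x)
  have hF : 0 ≤ F := (abs_nonneg _).trans (hfF x)
  have hbound : ∀ t, ENNReal.ofReal (|f (x + t • θ)| * exp (-∫ s in (0 : ℝ)..t, a (x + s • θ))) *
        ∫⁻ s in Ioc 0 t, G (x + s • θ) ≤ (Ioc 0 d).indicator (fun _ =>
          ENNReal.ofReal (F * exp (d * A)) * ∫⁻ s in Ioc 0 d, G (x + s • θ)) t := by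
    intro t
    by_cases ht : t ∈ Ioc 0 d
    · rw [indicator_of_mem ht]
      gcongr
      · exact hfF _
      · exact (neg_intervalIntegral_le_mul (fun s => haA _) ht.1.le).trans (by nlinarith [ht.2])
      · exact ht.2
    rw [indicator_of_notMem ht]
    rw [mem_Ioc, not_and_or, not_lt, not_le] at ht
    rcases ht with ht0 | htd
    · simp [Ioc_eq_empty_of_le ht0]
    · simp [hfsupp _ (add_smul_notMem_of_diam_lt hK hx hθ (hd.trans_lt htd))]
  calc _ ≤ ∫⁻ t, (Ioc 0 d).indicator (fun _ =>
          ENNReal.ofReal (F * exp (d * A)) * ∫⁻ s in Ioc 0 d, G (x + s • θ)) t :=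
        (setLIntegral_le_lintegral _ _).trans (lintegral_mono hbound)
    _ = _ := by rw [lintegral_indicator_const measurableSet_Ioc, Real.volume_Ioc, sub_zero]; ring

theorem enorm_mul_lintegral_rays_le {K : Set E} (hK : Bornology.IsBounded K) {d : ℝ}
    (hd : Metric.diam K ≤ d) {a f : E → ℝ} {A F : ℝ} (haA : ∀ y, |a y| ≤ A)
    (hasupp : ∀ y ∉ K, a y = 0) (hfF : ∀ y, |f y| ≤ F) (hfsupp : ∀ y ∉ K, f y = 0)
    (G : E → ℝ≥0∞) {ι : Type*} [MeasurableSpace ι] (ν : Measure ι) {θ : ι → E}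
    (hθ : ∀ i, ‖θ i‖ = 1) (x : E) :
    ‖a x‖ₑ * ∫⁻ i, (∫⁻ t in Ioi 0, ENNReal.ofReal (|f (x + t • θ i)| *
        exp (-∫ s in (0 : ℝ)..t, a (x + s • θ i))) * ∫⁻ s in Ioc 0 t, G (x + s • θ i)) ∂ν
      ≤ ENNReal.ofReal A * (ENNReal.ofReal d * ENNReal.ofReal (F * exp (d * A))) *
          ∫⁻ i, (∫⁻ s in Ioc 0 d, G (x + s • θ i)) ∂ν := by
  by_cases hx : x ∈ K
  · rw [mul_assoc, ← lintegral_const_mul' (ENNReal.ofReal d * ENNReal.ofReal (F * exp (d * A)))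
      _ (by finiteness)]
    refine mul_le_mul' ?_ (lintegral_mono fun i => lintegral_ray_le hK hd haA hfF hfsupp G hx (hθ i))
    rw [enorm_eq_ofReal_abs]
    exact ENNReal.ofReal_le_ofReal (haA x)
  · simp [hasupp x hx]

end Ray

theorem ofReal_mul_two_pi_mul_le {A F d : ℝ} (hA : 0 ≤ A) (hF : 0 ≤ F) (hd : 0 ≤ d) :
    ENNReal.ofReal A * (ENNReal.ofReal d * ENNReal.ofReal (F * exp (d * A))) *
        (ENNReal.ofReal (2 * π) * ENNReal.ofReal d)
      ≤ ENNReal.ofReal (4 * π * d ^ 2 * exp (d * A) * A * F) := by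
  have hC : 0 ≤ A * (d * (F * exp (d * A))) :=
    mul_nonneg hA (mul_nonneg hd (mul_nonneg hF (exp_pos _).le))
  rw [← ENNReal.ofReal_mul hd, ← ENNReal.ofReal_mul hA,
    ← ENNReal.ofReal_mul (p := 2 * π) (by positivity), ← ENNReal.ofReal_mul hC]
  exact ENNReal.ofReal_le_ofReal (by nlinarith [mul_nonneg hC (mul_nonneg pi_pos.le hd)])

theorem continuous_dir : Continuous dir :=
  (PiLp.continuous_toLp 2 _).comp <| continuous_pi fun i => by
    fin_cases i <;> simp [Real.continuous_cos, Real.continuous_sin]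

theorem norm_dir (φ : ℝ) : ‖dir φ‖ = 1 := by
  simp [EuclideanSpace.norm_eq, dir, Fin.sum_univ_two]

theorem stmt9_general (K : Set (EuclideanSpace ℝ (Fin 2))) (hK : IsCompact K)
    (d : ℝ) (hd : Metric.diam K ≤ d)
    (a : EuclideanSpace ℝ (Fin 2) → ℝ)
    (A : ℝ) (hA : IsLUB (Set.range fun y => |a y|) A)  -- `A = ‖a‖_∞`
    (hasupp : ∀ y ∉ K, a y = 0)
    (f : EuclideanSpace ℝ (Fin 2) → ℝ)
    (F : ℝ) (hF : IsLUB (Set.range fun y => |f y|) F)  -- `F = ‖f‖_∞`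
    (hfsupp : ∀ y ∉ K, f y = 0)
    (δa : EuclideanSpace ℝ (Fin 2) → ℝ) (hδa : MemLp δa 2 volume) :
    (∫⁻ x,
        ((‖a x‖₊ : ℝ≥0∞) *
          ∫⁻ φ in Set.Ioc 0 (2 * π), ∫⁻ t in Set.Ioi (0 : ℝ),
            ENNReal.ofReal (|f (x + t • dir φ)| *
                Real.exp (-∫ s in (0:ℝ)..t, a (x + s • dir φ))) *
              ∫⁻ s in Set.Ioc (0 : ℝ) t, (‖δa (x + s • dir φ)‖₊ : ℝ≥0∞)) ^ 2) ≤
      ENNReal.ofReal (4 * π * d ^ 2 * Real.exp (d * A) * A * F) ^ 2 *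
        ∫⁻ x, (‖δa x‖₊ : ℝ≥0∞) ^ 2 := by
  have haA : ∀ y, |a y| ≤ A := fun y => hA.1 ⟨y, rfl⟩
  have hfF : ∀ y, |f y| ≤ F := fun y => hF.1 ⟨y, rfl⟩
  have hA0 : 0 ≤ A := (abs_nonneg _).trans (haA 0)
  have hF0 : 0 ≤ F := (abs_nonneg _).trans (hfF 0)
  have hd0 : 0 ≤ d := Metric.diam_nonneg.trans hd
  -- `δa` is only a.e. measurable; a measurable majorant of `|δa|` makes Tonelli available.
  obtain ⟨g, hg, hδg, hδg_ae⟩ :=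
    hδa.aestronglyMeasurable.aemeasurable.enorm.exists_measurable_ge_ae_eq
  set ν := (volume.restrict (Ioc 0 (2 * π))).prod (volume.restrict (Ioc 0 d))
  set C := ENNReal.ofReal A * (ENNReal.ofReal d * ENNReal.ofReal (F * exp (d * A)))
  have hν : ν univ = ENNReal.ofReal (2 * π) * ENNReal.ofReal d := by
    simp [ν, ← univ_prod_univ, Measure.prod_prod, Real.volume_Ioc]
  have hv : Measurable fun ω : ℝ × ℝ => ω.2 • dir ω.1 :=
    measurable_snd.smul (continuous_dir.measurable.comp measurable_fst)
  calc _ ≤ ∫⁻ x, (C * ∫⁻ ω, g (x + ω.2 • dir ω.1) ∂ν) ^ 2 := by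
        refine lintegral_mono fun x => pow_le_pow_left' ?_ 2
        refine (enorm_mul_lintegral_rays_le hK.isBounded hd haA hasupp hfF hfsupp
          (fun y => ‖δa y‖ₑ) (volume.restrict (Ioc 0 (2 * π))) norm_dir x).trans ?_
        rw [lintegral_prod (fun ω => g (x + ω.2 • dir ω.1))
          (hg.comp (measurable_const.add hv)).aemeasurable]
        gcongr with φ s
        exact hδg _
    _ = C ^ 2 * ∫⁻ x, (∫⁻ ω, g (x + ω.2 • dir ω.1) ∂ν) ^ 2 := by
        simp_rw [mul_pow]
        exact lintegral_const_mul' _ _ (by finiteness)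
    _ ≤ C ^ 2 * (ν univ ^ 2 * ∫⁻ y, g y ^ 2) := by
        gcongr
        exact lintegral_sq_lintegral_comp_add_le volume ν hv hg
    _ = (C * ν univ) ^ 2 * ∫⁻ y, ‖δa y‖ₑ ^ 2 := by
        rw [lintegral_congr_ae (hδg_ae.mono fun y hy => by rw [← hy])]
        ring
    _ ≤ _ := by
        rw [hν]
        gcongr
        exacts [ofReal_mul_two_pi_mul_le hA0 hF0 hd0, le_rfl]

/-- For compact `K` with `diam K ≤ d`, bounded measurable `a, f` supported in `K` with
`A = ‖a‖_∞`, `F = ‖f‖_∞`, and `δa ∈ L²` supported in `K`, the function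
`W(x) = |a(x)| ∫_{S¹} ∫₀^∞ |f(x+tθ)| exp(−∫₀^t a(x+sθ) ds) (∫₀^t |δa(x+sθ)| ds) dt dθ`
is in `L²(ℝ²)` with `‖W‖_{L²} ≤ 4 π d² e^{d‖a‖_∞} ‖a‖_∞ ‖f‖_∞ ‖δa‖_{L²}`, expressed here
via lower Lebesgue integrals: `∫ W² ≤ (4 π d² e^{dA} A F)² ∫ |δa|²`. -/
theorem stmt9 (K : Set (EuclideanSpace ℝ (Fin 2))) (hK : IsCompact K)
    (d : ℝ) (hd : Metric.diam K ≤ d) (hdpos : 0 < d)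
    (a : EuclideanSpace ℝ (Fin 2) → ℝ) (hameas : Measurable a)
    (A : ℝ) (hA : IsLUB (Set.range fun y => |a y|) A)  -- `A = ‖a‖_∞`
    (hasupp : ∀ y ∉ K, a y = 0)
    (f : EuclideanSpace ℝ (Fin 2) → ℝ) (hfmeas : Measurable f)
    (F : ℝ) (hF : IsLUB (Set.range fun y => |f y|) F)  -- `F = ‖f‖_∞`
    (hfsupp : ∀ y ∉ K, f y = 0)
    (δa : EuclideanSpace ℝ (Fin 2) → ℝ) (hδa : MemLp δa 2 volume)
    (hδasupp : ∀ y ∉ K, δa y = 0) :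
    (∫⁻ x,
        ((‖a x‖₊ : ℝ≥0∞) *
          ∫⁻ φ in Set.Ioc 0 (2 * π), ∫⁻ t in Set.Ioi (0 : ℝ),
            ENNReal.ofReal (|f (x + t • dir φ)| *
                Real.exp (-∫ s in (0:ℝ)..t, a (x + s • dir φ))) *
              ∫⁻ s in Set.Ioc (0 : ℝ) t, (‖δa (x + s • dir φ)‖₊ : ℝ≥0∞)) ^ 2) ≤
      ENNReal.ofReal (4 * π * d ^ 2 * Real.exp (d * A) * A * F) ^ 2 *
        ∫⁻ x, (‖δa x‖₊ : ℝ≥0∞) ^ 2 :=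
  stmt9_general K hK d hd a A hA hasupp f F hF hfsupp δa hδa
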